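/- One-dimensional model of the kernel estimates: for ε, δ ∈ (0,1], integers k ≥ 0, h ≥ 0 with k ≤ N − 2 and k + 2h ≤ N (N = 2n − m), the double integral ∫_0^{δ²}∫_0^δ V^{N−2} dV dη / [(ε + η + V)^k (√ε + √η + V)^{2h}] is bounded by C·δ with C depending only on N, k, h. -/

import Mathlib

open MeasureTheory intervalIntegral Real

/-- One-dimensional model of the kernel estimates (radial form of `I₁{0,k,h}`):
for `N = 2n - m ≥ 3`, `k ≤ N - 2`, `k + 2h ≤ N`,
`∫₀^{δ²} ∫₀^δ V^{N-2} dV dη / ((ε+η+V)^k (√ε+√η+V)^{2h}) ≤ C·δ`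
with `C` depending only on `N, k, h`, uniformly in `ε ∈ (0,1]`. -/
theorem stmt17 (N k h : ℕ) (hN : 3 ≤ N) (hk : k ≤ N - 2) (hkh : k + 2 * h ≤ N) :
    ∃ C : ℝ, 0 < C ∧ ∀ ε δ : ℝ, 0 < ε → ε ≤ 1 → 0 < δ → δ ≤ 1 →
      (∫ η in (0:ℝ)..δ ^ 2, ∫ V in (0:ℝ)..δ,
          V ^ (N - 2) / ((ε + η + V) ^ k * (Real.sqrt ε + Real.sqrt η + V) ^ (2 * h)))
        ≤ C * δ := by
  refine ⟨3, by norm_num, ?_⟩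
  intro ε δ hε hε1 hδ hδ1
  have hδ0 : (0:ℝ) ≤ δ := hδ.le
  have hδ2 : (0:ℝ) ≤ δ ^ 2 := by positivity
  -- inner bound for each η ∈ (0, δ²]
  have key : ∀ η ∈ Set.Ioc (0:ℝ) (δ^2),
      (∫ V in (0:ℝ)..δ,
          V ^ (N - 2) / ((ε + η + V) ^ k * (Real.sqrt ε + Real.sqrt η + V) ^ (2 * h)))
        ≤ δ + η ^ (-(1/2) : ℝ) := by
    intro η hη
    obtain ⟨hη0, hη2⟩ := hη
    have hs : 0 < Real.sqrt η := Real.sqrt_pos.mpr hη0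
    set s := Real.sqrt η with hsdef
    have hsε : 0 ≤ Real.sqrt ε := Real.sqrt_nonneg ε
    -- integrability of the integrand in V
    have hfint : IntervalIntegrable
        (fun V => V ^ (N - 2) / ((ε + η + V) ^ k * (Real.sqrt ε + s + V) ^ (2 * h)))
        volume 0 δ := by
      apply ContinuousOn.intervalIntegrable
      apply ContinuousOn.div
      · fun_prop
      · fun_prop
      · intro V hV
        rw [Set.uIcc_of_le hδ0] at hV
        have hV0 : 0 ≤ V := hV.1
        have h1 : 0 < ε + η + V := by positivity
        have h2 : 0 < Real.sqrt ε + s + V := by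
          have : 0 < Real.sqrt ε := Real.sqrt_pos.mpr hε
          positivity
        positivity
    -- integrability of the bound in V
    have hgint : IntervalIntegrable (fun V : ℝ => 1 + ((s + V)^2)⁻¹) volume 0 δ := by
      apply ContinuousOn.intervalIntegrable
      apply ContinuousOn.add continuousOn_const
      apply ContinuousOn.inv₀
      · fun_prop
      · intro V hV
        rw [Set.uIcc_of_le hδ0] at hV
        have hV0 : 0 ≤ V := hV.1
        positivity
    have hginv : IntervalIntegrable (fun V : ℝ => ((s + V)^2)⁻¹) volume 0 δ := by
      apply ContinuousOn.intervalIntegrable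
      apply ContinuousOn.inv₀
      · fun_prop
      · intro V hV
        rw [Set.uIcc_of_le hδ0] at hV
        have hV0 : 0 ≤ V := hV.1
        positivity
    -- pointwise bound
    have hpt : ∀ V ∈ Set.Icc (0:ℝ) δ,
        V ^ (N - 2) / ((ε + η + V) ^ k * (Real.sqrt ε + s + V) ^ (2 * h))
          ≤ 1 + ((s + V)^2)⁻¹ := by
      intro V hV
      obtain ⟨hV0, hVδ⟩ := hV
      have hV1 : V ≤ 1 := hVδ.trans hδ1
      set A := ε + η + V with hA0
      set B := Real.sqrt ε + s + V with hB0
      have hA : 0 < A := by positivity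
      have hB : 0 < B := by
        have : 0 < Real.sqrt ε := Real.sqrt_pos.mpr hε
        positivity
      have hsV : 0 < s + V := by positivity
      have hVA : V ≤ A := by simp only [hA0]; linarith
      have hVB : V ≤ B := by simp only [hB0]; linarith
      have hsVB : s + V ≤ B := by simp only [hB0]; linarith
      have hc : 0 < ((s + V)^2)⁻¹ := by positivity
      rw [div_le_iff₀ (by positivity)]
      rcases Nat.eq_zero_or_pos h with h0 | h1
      · subst h0
        have hpow : V ^ (N - 2) ≤ A ^ k := by
          calc V ^ (N - 2) = V ^ k * V ^ (N - 2 - k) := by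
                rw [← pow_add]; congr 1; omega
            _ ≤ A ^ k * 1 := by
                apply mul_le_mul (pow_le_pow_left₀ hV0 hVA k)
                  (pow_le_one₀ hV0 hV1) (by positivity) (by positivity)
            _ = A ^ k := mul_one _
        simp only [Nat.mul_zero, pow_zero, mul_one]
        nlinarith [pow_pos hA k, hc.le]
      · have e1 : N - 2 = k + (2*h - 2) + (N - 2 - k - (2*h - 2)) := by omega
        have step : V ^ (N - 2) ≤ A ^ k * B ^ (2*h - 2) := by
          rw [e1, pow_add, pow_add]
          have hm : V ^ k * V ^ (2*h-2) * V ^ (N - 2 - k - (2*h-2))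
              ≤ A ^ k * B ^ (2*h-2) * 1 := mul_le_mul
            (mul_le_mul (pow_le_pow_left₀ hV0 hVA k) (pow_le_pow_left₀ hV0 hVB (2*h-2))
              (by positivity) (by positivity))
            (pow_le_one₀ hV0 hV1) (by positivity) (by positivity)
          simpa using hm
        have step2 : (B^2)⁻¹ ≤ ((s + V)^2)⁻¹ := by
          apply inv_anti₀ (by positivity)
          exact pow_le_pow_left₀ hsV.le hsVB 2
        calc V ^ (N - 2) ≤ A ^ k * B ^ (2*h - 2) := step
          _ = A ^ k * B ^ (2*h) * (B^2)⁻¹ := by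
              rw [mul_assoc, ← pow_sub₀ _ hB.ne' (show 2 ≤ 2*h by omega)]
          _ ≤ A ^ k * B ^ (2*h) * ((s + V)^2)⁻¹ := by
              apply mul_le_mul_of_nonneg_left step2 (by positivity)
          _ ≤ (1 + ((s + V)^2)⁻¹) * (A ^ k * B ^ (2*h)) := by
              nlinarith [mul_pos (pow_pos hA k) (pow_pos hB (2*h)), hc.le]
    have h1 : (∫ V in (0:ℝ)..δ,
          V ^ (N - 2) / ((ε + η + V) ^ k * (Real.sqrt ε + s + V) ^ (2 * h)))
        ≤ ∫ V in (0:ℝ)..δ, (1 + ((s + V)^2)⁻¹) :=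
      intervalIntegral.integral_mono_on hδ0 hfint hgint hpt
    -- compute the bound integral
    have hFT : (∫ V in (0:ℝ)..δ, ((s + V)^2)⁻¹) = s⁻¹ - (s + δ)⁻¹ := by
      have hderiv : ∀ x ∈ Set.uIcc (0:ℝ) δ,
          HasDerivAt (fun V : ℝ => -(s + V)⁻¹) (((s + x)^2)⁻¹) x := by
        intro x hx
        rw [Set.uIcc_of_le hδ0] at hx
        have hx0 : 0 ≤ x := hx.1
        have hne : s + x ≠ 0 := by positivity
        have hd : HasDerivAt (fun V : ℝ => s + V) 1 x := (hasDerivAt_id x).const_add s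
        have h2 := (hd.inv hne).neg
        exact h2.congr_deriv (by ring)
      rw [intervalIntegral.integral_eq_sub_of_hasDerivAt hderiv hginv]
      ring
    have h2 : (∫ V in (0:ℝ)..δ, (1 + ((s + V)^2)⁻¹)) = δ + (s⁻¹ - (s + δ)⁻¹) := by
      rw [intervalIntegral.integral_add intervalIntegrable_const hginv,
        intervalIntegral.integral_const, hFT]
      simp
    have hrw : η ^ (-(1/2) : ℝ) = s⁻¹ := by
      rw [Real.rpow_neg hη0.le, hsdef, Real.sqrt_eq_rpow]
    have h3 : (s + δ)⁻¹ ≥ 0 := by positivity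
    rw [hrw]
    linarith [h1, h2.le, h2.ge]
  -- outer comparison
  have hout : (∫ η in (0:ℝ)..δ ^ 2, ∫ V in (0:ℝ)..δ,
          V ^ (N - 2) / ((ε + η + V) ^ k * (Real.sqrt ε + Real.sqrt η + V) ^ (2 * h)))
      ≤ ∫ η in (0:ℝ)..δ ^ 2, (δ + η ^ (-(1/2) : ℝ)) := by
    rw [intervalIntegral.integral_of_le hδ2, intervalIntegral.integral_of_le hδ2]
    apply integral_mono_of_nonneg
    · apply ae_restrict_of_forall_mem measurableSet_Ioc
      intro η hη
      apply intervalIntegral.integral_nonneg hδ0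
      intro V hV
      have hV0 : 0 ≤ V := hV.1
      have hη0 : 0 ≤ η := hη.1.le
      apply div_nonneg (by positivity) (by positivity)
    · have hI : IntervalIntegrable (fun η : ℝ => δ + η ^ (-(1/2) : ℝ)) volume 0 (δ^2) :=
        intervalIntegrable_const.add (intervalIntegral.intervalIntegrable_rpow' (by norm_num))
      exact hI.1
    · exact ae_restrict_of_forall_mem measurableSet_Ioc key
  -- compute the outer bound
  have hval : (∫ η in (0:ℝ)..δ ^ 2, (δ + η ^ (-(1/2) : ℝ))) = δ^2 * δ + 2 * δ := by
    rw [intervalIntegral.integral_add intervalIntegrable_const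
      (intervalIntegral.intervalIntegrable_rpow' (by norm_num)),
      intervalIntegral.integral_const, integral_rpow (Or.inl (by norm_num))]
    have : ((δ^2 : ℝ)) ^ ((-(1/2) : ℝ) + 1) = δ := by
      norm_num
      rw [← Real.sqrt_eq_rpow, Real.sqrt_sq hδ0]
    rw [this]
    norm_num
    ring
  have : (∫ η in (0:ℝ)..δ ^ 2, ∫ V in (0:ℝ)..δ,
          V ^ (N - 2) / ((ε + η + V) ^ k * (Real.sqrt ε + Real.sqrt η + V) ^ (2 * h)))
      ≤ δ^2 * δ + 2 * δ := hval ▸ hout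
  nlinarith [this, hδ, hδ1]
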